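/- arXiv:2103.14732 — 4 statements merged into one kernel-verified Lean document; each statement's English description precedes it below -/
import Mathlib

section
/- Let u_1(t),…,u_N(t) be a differentiable solution of the shell model on an interval with u_n(t) ≠ 0 for all n and t, and set u_0(t) ≡ 1. Then for each n = 1,…,N the multiplier w_n(t) = u_n(t)/|u_{n−1}(t)| satisfies the equation dw_n/dt = k_n |u_{n−1}(t)| f(w_n(t)). -/
open Complex Real

/-- The function `f` of the model, defined in polar coordinates by
`f(ρ e^{iθ}) = (R(θ) + R'(θ) − ρ + iρ) e^{iθ}` for `ρ > 0`. -/
noncomputable def fpol (R : ℝ → ℝ) (z : ℂ) : ℂ :=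
  (((R z.arg + deriv R z.arg - ‖z‖ : ℝ) : ℂ) + ((‖z‖ : ℝ) : ℂ) * Complex.I) *
    (z / ((‖z‖ : ℝ) : ℂ))

/-- `F_n = (|u_{n−1}|²/|u_n|²) f(u_n/|u_{n−1}|)`. -/
noncomputable def Fterm (R : ℝ → ℝ) (u : ℕ → ℂ) (n : ℕ) : ℂ :=
  (((‖u (n - 1)‖) ^ 2 / (‖u n‖) ^ 2 : ℝ) : ℂ) *
    fpol R (u n / ((‖u (n - 1)‖ : ℝ) : ℂ))

/-- Right-hand side of the shell model:
`du_n/dt = k_n|u_n|² F_n + u_n Σ_{m=1}^{n−1} Re(k_m conj(u_m) F_m)` with `k_n = 2^n`. -/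
noncomputable def shellV (R : ℝ → ℝ) (u : ℕ → ℂ) (n : ℕ) : ℂ :=
  (((2 : ℝ) ^ n : ℝ) : ℂ) * (((‖u n‖) ^ 2 : ℝ) : ℂ) * Fterm R u n +
    u n * ((∑ m ∈ Finset.Icc 1 (n - 1),
      ((((2 : ℝ) ^ m : ℝ) : ℂ) * (starRingEnd ℂ) (u m) * Fterm R u m).re : ℝ) : ℂ)

/-- A solution of the shell model for shells `1,…,N` on `[0,∞)`, with the
convention `u_0 ≡ 1`: all shell velocities are nonzero and satisfy the ODE system. -/
def IsShellSolution (R : ℝ → ℝ) (N : ℕ) (u : ℕ → ℝ → ℂ) : Prop :=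
  (∀ t : ℝ, u 0 t = 1) ∧
  (∀ n, 1 ≤ n → n ≤ N → ∀ t : ℝ, 0 ≤ t → u n t ≠ 0) ∧
  (∀ n, 1 ≤ n → n ≤ N → ∀ t : ℝ, 0 ≤ t →
    HasDerivWithinAt (u n) (shellV R (fun m => u m t) n) (Set.Ici (0 : ℝ)) t)


lemma hasDerivAt_cabs {u : ℝ → ℂ} {v : ℂ} {t : ℝ} (hu : HasDerivAt u v t) (h : u t ≠ 0) :
    HasDerivAt (fun s => ‖u s‖)
      (((starRingEnd ℂ) (u t) * v).re / ‖u t‖) t := by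
  have hsq : HasDerivAt (fun s => ‖u s‖ ^ 2) (2 * (inner ℝ (u t) v : ℝ)) t := hu.norm_sq
  have habs0 : ‖u t‖ ^ 2 ≠ 0 := by simpa using h
  have h2 := (Real.hasDerivAt_sqrt habs0).comp t hsq
  have heq : (fun s => Real.sqrt (‖u s‖ ^ 2)) = fun s => ‖u s‖ := by
    funext s
    rw [Real.sqrt_sq (norm_nonneg _)]
  rw [Function.comp_def, heq] at h2
  refine h2.congr_deriv (Eq.symm ?_)
  rw [Real.sqrt_sq (norm_nonneg _)]
  have hi : (inner ℝ (u t) v : ℝ) = ((starRingEnd ℂ) (u t) * v).re := by rw [Complex.inner, mul_comm]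
  rw [hi]
  have hn : (‖u t‖ : ℝ) = ‖u t‖ := rfl
  field_simp

/-- The Kolmogorov multipliers `w_n = u_n/|u_{n−1}|` of a (nonvanishing, differentiable)
solution of the shell model satisfy `dw_n/dt = k_n |u_{n−1}(t)| f(w_n(t))`. -/
theorem multiplier_equation
    (R : ℝ → ℝ) (hper : Function.Periodic R (2 * π)) (hpos : ∀ θ : ℝ, 0 < R θ)
    (hC2 : ContDiff ℝ 2 R)
    (N : ℕ) (hN : 1 ≤ N) (a b : ℝ) (u : ℕ → ℝ → ℂ)
    (hu0 : ∀ t : ℝ, u 0 t = 1)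
    (hne : ∀ n, 1 ≤ n → n ≤ N → ∀ t ∈ Set.Ioo a b, u n t ≠ 0)
    (hode : ∀ n, 1 ≤ n → n ≤ N → ∀ t ∈ Set.Ioo a b,
      HasDerivAt (u n) (shellV R (fun m => u m t) n) t)
    (n : ℕ) (hn1 : 1 ≤ n) (hnN : n ≤ N) (t : ℝ) (ht : t ∈ Set.Ioo a b) :
    HasDerivAt (fun s : ℝ => u n s / ((‖u (n - 1) s‖ : ℝ) : ℂ))
      ((((2 : ℝ) ^ n * ‖u (n - 1) t‖ : ℝ) : ℂ) *
        fpol R (u n t / ((‖u (n - 1) t‖ : ℝ) : ℂ))) t := by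
  have hunt : u n t ≠ 0 := hne n hn1 hnN t ht
  have hprev : u (n - 1) t ≠ 0 := by
    rcases Nat.lt_or_ge 1 n with h2 | h1
    · exact hne (n - 1) (by omega) (by omega) t ht
    · have hn : n = 1 := le_antisymm h1 hn1
      rw [hn]
      simp [hu0]
  set ρ : ℝ := ‖u (n - 1) t‖ with hρdef
  have hρ0 : ρ ≠ 0 := by
    rw [hρdef]
    simpa using hprev
  set S : ℝ := ∑ m ∈ Finset.Icc 1 (n - 1),
      ((((2 : ℝ) ^ m : ℝ) : ℂ) * (starRingEnd ℂ) (u m t) *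
        Fterm R (fun k => u k t) m).re with hSdef
  have habs : HasDerivAt (fun s => ‖u (n - 1) s‖) (ρ * S) t := by
    rcases Nat.lt_or_ge 1 n with h2 | h1
    · set m := n - 1 with hm
      have hm1 : 1 ≤ m := by omega
      have hmN : m ≤ N := by omega
      have hv := hode m hm1 hmN t ht
      have hder := hasDerivAt_cabs hv hprev
      have hcme : (starRingEnd ℂ) (u m t) * u m t = ((ρ ^ 2 : ℝ) : ℂ) := by
        rw [mul_comm, Complex.mul_conj, Complex.normSq_eq_norm_sq]
      have habsm : ‖u m t‖ ^ 2 = ρ ^ 2 := by rw [← hρdef]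
      have hexp : (starRingEnd ℂ) (u m t) * shellV R (fun k => u k t) m
          = ((ρ ^ 2 : ℝ) : ℂ) *
            ((((2 : ℝ) ^ m : ℝ) : ℂ) * (starRingEnd ℂ) (u m t) * Fterm R (fun k => u k t) m
              + ((∑ j ∈ Finset.Icc 1 (m - 1),
                  ((((2 : ℝ) ^ j : ℝ) : ℂ) * (starRingEnd ℂ) (u j t) *
                    Fterm R (fun k => u k t) j).re : ℝ) : ℂ)) := by
        rw [shellV, habsm]
        linear_combination (((∑ j ∈ Finset.Icc 1 (m - 1),
            ((((2 : ℝ) ^ j : ℝ) : ℂ) * (starRingEnd ℂ) (u j t) *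
              Fterm R (fun k => u k t) j).re : ℝ)) : ℂ) * hcme
      have hSsum : S = (∑ j ∈ Finset.Icc 1 (m - 1),
            ((((2 : ℝ) ^ j : ℝ) : ℂ) * (starRingEnd ℂ) (u j t) *
              Fterm R (fun k => u k t) j).re)
          + ((((2 : ℝ) ^ m : ℝ) : ℂ) * (starRingEnd ℂ) (u m t) *
              Fterm R (fun k => u k t) m).re := by
        rw [hSdef, show m = (m - 1) + 1 by omega,
          Finset.sum_Icc_succ_top (by omega : 1 ≤ (m - 1) + 1), Nat.add_sub_cancel]
      convert hder using 1
      rw [← hρdef, hexp, Complex.re_ofReal_mul, Complex.add_re, Complex.ofReal_re, hSsum]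
      field_simp
      ring
    · have h0 : n - 1 = 0 := by omega
      have hfun : (fun s => ‖u (n - 1) s‖) = fun _ => (1 : ℝ) := by
        funext s
        rw [h0, hu0 s]
        simp
      have hSz : S = 0 := by
        rw [hSdef, h0]
        simp
      rw [hfun, hSz, mul_zero]
      exact hasDerivAt_const t 1
  have hw : HasDerivAt (fun s => ((‖u (n - 1) s‖ : ℝ) : ℂ)) (((ρ * S : ℝ) : ℂ)) t :=
    habs.ofReal_comp
  have hun := hode n hn1 hnN t ht
  have hgne : ((ρ : ℝ) : ℂ) ≠ 0 := by exact_mod_cast hρ0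
  have hA0 : ‖u n t‖ ≠ 0 := by simpa using hunt
  have hA0' : ((‖u n t‖ : ℝ) : ℂ) ≠ 0 := by exact_mod_cast hA0
  have hd := hun.div hw (by rw [← hρdef]; exact hgne)
  refine hd.congr_deriv (Eq.symm ?_)
  rw [← hρdef, shellV, Fterm, ← hρdef, ← hSdef]
  push_cast
  field_simp
  ring
end

section
/- Let w₀ ∈ ℂ be nonzero, and set φ = arg w₀ and r = |w₀| − R(φ). Then the function w(τ) = [r e^{−τ} + R(τ+φ)] e^{i(τ+φ)} is nonzero for all τ ≥ 0, satisfies w(0) = w₀, and is the unique solution on [0,∞) of the ordinary differential equation dw/dτ = f(w) with initial value w₀. -/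
open Complex Real

section Aux

open Set

lemma ofReal_hasDerivWithinAt {f : ℝ → ℝ} {u x : ℝ} {s : Set ℝ} (hf : HasDerivWithinAt f u s x) :
    HasDerivWithinAt (fun y => ((f y : ℝ) : ℂ)) (u : ℂ) s x := by
  exact hf.ofReal_comp

lemma re_hasDerivWithinAt {v : ℝ → ℂ} {f' : ℂ} {x : ℝ} {s : Set ℝ}
    (hv : HasDerivWithinAt v f' s x) :
    HasDerivWithinAt (fun t => (v t).re) f'.re s x := by
  exact Complex.reCLM.hasFDerivAt.comp_hasDerivWithinAt x hv

lemma im_hasDerivWithinAt {v : ℝ → ℂ} {f' : ℂ} {x : ℝ} {s : Set ℝ}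
    (hv : HasDerivWithinAt v f' s x) :
    HasDerivWithinAt (fun t => (v t).im) f'.im s x := by
  exact Complex.imCLM.hasFDerivAt.comp_hasDerivWithinAt x hv

lemma periodic_deriv' {f : ℝ → ℝ} {c : ℝ} (h : Function.Periodic f c) :
    Function.Periodic (deriv f) c := fun x => by
  have h2 : (fun y => f (y + c)) = f := funext h
  rw [← deriv_comp_add_const, h2]

lemma per_eval {R : ℝ → ℝ} (h : Function.Periodic R (2 * π)) (θ : ℝ) (n : ℤ) :
    R (θ + 2 * π * n) = R θ := by
  have := h.sub_int_mul_eq (x := θ) (n := -n)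
  convert this using 2
  push_cast; ring

lemma arg_ofReal_mul_exp {ρ : ℝ} (hρ : 0 < ρ) (θ : ℝ) :
    ∃ n : ℤ, ((ρ : ℂ) * Complex.exp ((θ : ℂ) * I)).arg = θ + 2 * π * n := by
  refine ⟨⌊(π - θ) / (2 * π)⌋, ?_⟩
  have h := Complex.arg_mul_cos_add_sin_mul_I_sub hρ θ
  rw [Complex.exp_mul_I]
  push_cast at h ⊢
  linarith

lemma abs_ofReal_mul_exp {ρ : ℝ} (hρ : 0 ≤ ρ) (θ : ℝ) :
    ‖(ρ : ℂ) * Complex.exp ((θ : ℂ) * I)‖ = ρ := by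
  simp [Complex.norm_exp, _root_.abs_of_nonneg hρ, hρ]

lemma fpol_eval {R : ℝ → ℝ} (hper : Function.Periodic R (2 * π))
    (hper' : Function.Periodic (deriv R) (2 * π)) {ρ : ℝ} (hρ : 0 < ρ) (θ : ℝ) :
    fpol R ((ρ : ℂ) * Complex.exp ((θ : ℂ) * I)) =
      (((R θ + deriv R θ - ρ : ℝ) : ℂ) + (ρ : ℂ) * I) * Complex.exp ((θ : ℂ) * I) := by
  obtain ⟨n, harg⟩ := arg_ofReal_mul_exp hρ θ
  have habs := abs_ofReal_mul_exp hρ.le θ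
  have hz : ((ρ : ℂ) * Complex.exp ((θ : ℂ) * I)) / ((ρ : ℝ) : ℂ) = Complex.exp ((θ : ℂ) * I) := by
    rw [mul_comm, mul_div_assoc, div_self (by exact_mod_cast hρ.ne'), mul_one]
  unfold fpol
  rw [habs, harg, per_eval hper θ n, per_eval hper' θ n, hz]

lemma hasDerivAt_rho {R : ℝ → ℝ} (hC2 : ContDiff ℝ 2 R) (r φ τ : ℝ) :
    HasDerivAt (fun τ => r * Real.exp (-τ) + R (τ + φ))
      (-(r * Real.exp (-τ)) + deriv R (τ + φ)) τ := by
  have h1 : HasDerivAt (fun τ : ℝ => r * Real.exp (-τ)) (-(r * Real.exp (-τ))) τ := by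
    have := ((Real.hasDerivAt_exp (-τ)).comp τ (hasDerivAt_neg τ)).const_mul r
    simpa [mul_comm] using this
  have h2 : HasDerivAt (fun τ : ℝ => R (τ + φ)) (deriv R (τ + φ)) τ := by
    have hR : HasDerivAt R (deriv R (τ + φ)) (τ + φ) :=
      ((hC2.differentiable two_ne_zero) (τ + φ)).hasDerivAt
    exact hR.comp_add_const τ φ
  exact h1.add h2

lemma hasDerivAt_cexp_aff (φ τ : ℝ) :
    HasDerivAt (fun τ : ℝ => Complex.exp (((τ + φ : ℝ) : ℂ) * I))
      (I * Complex.exp (((τ + φ : ℝ) : ℂ) * I)) τ := by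
  have he : HasDerivAt (fun z : ℂ => Complex.exp ((z + (φ : ℂ)) * I))
      (Complex.exp (((τ : ℂ) + (φ : ℂ)) * I) * ((1 : ℂ) * I)) (τ : ℂ) :=
    (((hasDerivAt_id (τ : ℂ)).add_const (φ : ℂ)).mul_const I).cexp
  have h2 := he.comp_ofReal (z := τ)
  have hfun : (fun y : ℝ => Complex.exp (((y : ℂ) + (φ : ℂ)) * I))
      = fun τ : ℝ => Complex.exp (((τ + φ : ℝ) : ℂ) * I) := by
    funext y; push_cast; ring_nf
  rw [hfun] at h2
  convert h2 using 1
  push_cast; ring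

lemma hasDerivAt_cexp_neg (τ : ℝ) :
    HasDerivAt (fun t : ℝ => Complex.exp (-(t : ℂ) * I))
      (-I * Complex.exp (-(τ : ℂ) * I)) τ := by
  have he : HasDerivAt (fun z : ℂ => Complex.exp (-z * I))
      (Complex.exp (-(τ : ℂ) * I) * (-1 * I)) (τ : ℂ) :=
    (((hasDerivAt_id (τ : ℂ)).neg).mul_const I).cexp
  have h2 := he.comp_ofReal (z := τ)
  convert h2 using 1
  ring

lemma hasDerivAt_Rshift {R : ℝ → ℝ} (hC2 : ContDiff ℝ 2 R) (φ τ : ℝ) :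
    HasDerivAt (fun τ : ℝ => R (τ + φ)) (deriv R (τ + φ)) τ := by
  have hR : HasDerivAt R (deriv R (τ + φ)) (τ + φ) :=
    ((hC2.differentiable two_ne_zero) (τ + φ)).hasDerivAt
  exact hR.comp_add_const τ φ

lemma rho_pos {R : ℝ → ℝ} (hC2 : ContDiff ℝ 2 R)
    (hRp : ∀ θ : ℝ, 0 < R θ + deriv R θ) {r φ : ℝ} (hr : 0 < r + R φ) :
    ∀ τ : ℝ, 0 ≤ τ → 0 < r * Real.exp (-τ) + R (τ + φ) := by
  intro τ hτ
  set g : ℝ → ℝ := fun τ => Real.exp τ * R (τ + φ) with hg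
  have hmono : StrictMono g := by
    apply strictMono_of_deriv_pos
    intro x
    have hd : HasDerivAt g (Real.exp x * R (x + φ) + Real.exp x * deriv R (x + φ)) x :=
      (Real.hasDerivAt_exp x).mul (hasDerivAt_Rshift hC2 φ x)
    rw [hd.deriv]
    have := hRp (x + φ)
    nlinarith [Real.exp_pos x]
  have hge : R φ ≤ g τ := by
    have := hmono.monotone hτ
    simpa [hg] using this
  have h1 : 0 < r + g τ := by linarith
  have h2 : r * Real.exp (-τ) + R (τ + φ) = Real.exp (-τ) * (r + g τ) := by
    rw [hg]
    simp only [Real.exp_neg]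
    field_simp
  rw [h2]
  exact mul_pos (Real.exp_pos _) h1

lemma conj_mul_fpol {R : ℝ → ℝ} {z : ℂ} (hz : z ≠ 0) :
    (starRingEnd ℂ) z * fpol R z =
      (((R z.arg + deriv R z.arg - ‖z‖ : ℝ) : ℂ)
        + ((‖z‖ : ℝ) : ℂ) * Complex.I) * ((‖z‖ : ℝ) : ℂ) := by
  have hρ : (0 : ℝ) < ‖z‖ := norm_pos_iff.mpr hz
  have h1 : (starRingEnd ℂ) z * (z / ((‖z‖ : ℝ) : ℂ)) = ((‖z‖ : ℝ) : ℂ) := by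
    rw [mul_div_assoc', mul_comm, Complex.mul_conj]
    have hne' : ((‖z‖ : ℝ) : ℂ) ≠ 0 := by exact_mod_cast hρ.ne'
    rw [Complex.normSq_eq_norm_sq]
    push_cast
    rw [pow_two, mul_div_assoc, div_self hne', mul_one]
  unfold fpol
  rw [mul_comm ((starRingEnd ℂ) z), mul_assoc, mul_comm _ ((starRingEnd ℂ) z), h1]

lemma hasDerivWithinAt_abs_comp {R : ℝ → ℝ} {v : ℝ → ℂ} {τ : ℝ} {s : Set ℝ}
    (hne : v τ ≠ 0) (hdv : HasDerivWithinAt v (fpol R (v τ)) s τ) :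
    HasDerivWithinAt (fun t => ‖v t‖)
      (R (v τ).arg + deriv R (v τ).arg - ‖v τ‖) s τ := by
  set z := v τ with hz
  set ρ : ℝ := ‖z‖ with hρdef
  have hρ : (0 : ℝ) < ρ := norm_pos_iff.mpr hne
  set f' : ℂ := fpol R z with hf'
  have hre := re_hasDerivWithinAt hdv
  have him := im_hasDerivWithinAt hdv
  have hn : HasDerivWithinAt (fun t => (v t).re ^ 2 + (v t).im ^ 2)
      ((2 : ℕ) * z.re ^ 1 * f'.re + (2 : ℕ) * z.im ^ 1 * f'.im) s τ :=
    (hre.pow 2).add (him.pow 2)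
  have hsum : z.re ^ 2 + z.im ^ 2 = ρ ^ 2 := by
    rw [hρdef, Complex.sq_norm, Complex.normSq_apply]; ring
  have hne0 : z.re ^ 2 + z.im ^ 2 ≠ 0 := by rw [hsum]; positivity
  have hsq := (Real.hasDerivAt_sqrt hne0).comp_hasDerivWithinAt τ hn
  have hfun : (fun t => ‖v t‖) = fun t => Real.sqrt ((v t).re ^ 2 + (v t).im ^ 2) := by
    funext t
    rw [Complex.norm_def, Complex.normSq_apply]
    ring_nf
  rw [hfun]
  refine hsq.congr_deriv ?_
  have key := conj_mul_fpol (R := R) hne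
  have hre' : z.re * f'.re + z.im * f'.im
      = (R z.arg + deriv R z.arg - ρ) * ρ := by
    have h2 : ((starRingEnd ℂ) z * f').re
        = (R z.arg + deriv R z.arg - ρ) * ρ := by
      rw [hf', key]; simp [hρdef]
    rw [← h2]; simp [Complex.mul_re]; try ring
  rw [hsum, Real.sqrt_sq hρ.le]
  push_cast
  field_simp
  nlinarith [hre']

lemma unique_sol {R : ℝ → ℝ} (hper : Function.Periodic R (2 * π)) (hC2 : ContDiff ℝ 2 R)
    {w0 : ℂ} (hw0 : w0 ≠ 0) {v : ℝ → ℂ} (hv0 : v 0 = w0)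
    (hvne : ∀ τ : ℝ, 0 ≤ τ → v τ ≠ 0)
    (hdv : ∀ τ : ℝ, 0 ≤ τ → HasDerivWithinAt v (fpol R (v τ)) (Set.Ici (0 : ℝ)) τ) :
    ∀ τ : ℝ, 0 ≤ τ → v τ =
      (((‖w0‖ - R w0.arg) * Real.exp (-τ) + R (τ + w0.arg) : ℝ) : ℂ)
        * Complex.exp (((τ + w0.arg : ℝ) : ℂ) * I) := by
  set φ : ℝ := w0.arg with hφ
  set a : ℝ → ℝ := fun t => ‖v t‖ with ha_def
  have hapos : ∀ t : ℝ, 0 ≤ t → 0 < a t := fun t ht => norm_pos_iff.mpr (hvne t ht)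
  have hane : ∀ t : ℝ, 0 ≤ t → ((a t : ℝ) : ℂ) ≠ 0 := fun t ht => by
    exact_mod_cast (hapos t ht).ne'
  have hda : ∀ t : ℝ, 0 ≤ t →
      HasDerivWithinAt a (R (v t).arg + deriv R (v t).arg - a t) (Set.Ici 0) t :=
    fun t ht => hasDerivWithinAt_abs_comp (hvne t ht) (hdv t ht)
  set u : ℝ → ℂ := fun t => v t * Complex.exp (-(t : ℂ) * I) with hu_def
  have hdu : ∀ t : ℝ, 0 ≤ t →
      HasDerivWithinAt u
        ((((R (v t).arg + deriv R (v t).arg - a t : ℝ) : ℂ) / ((a t : ℝ) : ℂ)) * u t)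
        (Set.Ici 0) t := by
    intro t ht
    have h1 := (hdv t ht).mul (hasDerivAt_cexp_neg t).hasDerivWithinAt
    rw [hu_def]
    refine h1.congr_deriv ?_
    simp only [hu_def, ha_def, fpol]
    have hne' : ((‖v t‖ : ℝ) : ℂ) ≠ 0 := hane t ht
    field_simp
    ring
  set s : ℝ → ℂ := fun t => u t / ((a t : ℝ) : ℂ) with hs_def
  have hds : ∀ t : ℝ, 0 ≤ t → HasDerivWithinAt s 0 (Set.Ici 0) t := by
    intro t ht
    have h := (hdu t ht).div (ofReal_hasDerivWithinAt (hda t ht)) (hane t ht)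
    rw [hs_def]
    refine h.congr_deriv ?_
    have hne' := hane t ht
    field_simp
    ring
  have hconst : ∀ τ : ℝ, 0 ≤ τ → s τ = s 0 := by
    intro τ hτ
    refine constant_of_has_deriv_right_zero (f := s) (a := 0) (b := τ)
      (fun x hx => ((hds x hx.1).mono Set.Icc_subset_Ici_self).continuousWithinAt)
      (fun x hx => (hds x hx.1).mono (Set.Ici_subset_Ici.mpr hx.1)) τ ⟨hτ, le_refl τ⟩
  have hs0 : s 0 = Complex.exp ((φ : ℂ) * I) := by
    have hu0 : u 0 = w0 := by simp [hu_def, hv0]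
    have ha0 : a 0 = ‖w0‖ := by simp [ha_def, hv0]
    have hne' : ((‖w0‖ : ℝ) : ℂ) ≠ 0 := by
      exact_mod_cast (norm_pos_iff.mpr hw0).ne'
    rw [hs_def]
    simp only [hu0, ha0]
    rw [div_eq_iff hne', mul_comm]
    exact (Complex.norm_mul_exp_arg_mul_I w0).symm ▸ rfl
  have hv : ∀ τ : ℝ, 0 ≤ τ → v τ = ((a τ : ℝ) : ℂ) * Complex.exp (((τ + φ : ℝ) : ℂ) * I) := by
    intro τ hτ
    have h := hconst τ hτ
    rw [hs0] at h
    have hu' : u τ = ((a τ : ℝ) : ℂ) * Complex.exp ((φ : ℂ) * I) := by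
      have : u τ = s τ * ((a τ : ℝ) : ℂ) := by
        rw [hs_def]
        exact (div_mul_cancel₀ _ (hane τ hτ)).symm
      rw [this, h]; ring
    have h2 : v τ = u τ * Complex.exp ((τ : ℂ) * I) := by
      rw [hu_def]
      simp only [mul_assoc, ← Complex.exp_add]
      simp
    rw [h2, hu', mul_assoc, ← Complex.exp_add]
    congr 1
    push_cast; ring
  have hper' := periodic_deriv' hper
  have hda' : ∀ t : ℝ, 0 ≤ t →
      HasDerivWithinAt a (R (t + φ) + deriv R (t + φ) - a t) (Set.Ici 0) t := by
    intro t ht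
    have h := hda t ht
    obtain ⟨n, harg⟩ := arg_ofReal_mul_exp (hapos t ht) (t + φ)
    have hvarg : (v t).arg = (t + φ) + 2 * π * n := by
      rw [hv t ht]; exact harg
    rw [hvarg, per_eval hper _ n, per_eval hper' _ n] at h
    exact h
  set q : ℝ → ℝ := fun t => Real.exp t * a t - Real.exp t * R (t + φ) with hq_def
  have hdq : ∀ t : ℝ, 0 ≤ t → HasDerivWithinAt q 0 (Set.Ici 0) t := by
    intro t ht
    have h1 := (Real.hasDerivAt_exp t).hasDerivWithinAt.mul (hda' t ht)
    have h2 := ((Real.hasDerivAt_exp t).mul (hasDerivAt_Rshift hC2 φ t)).hasDerivWithinAt (s := Set.Ici (0:ℝ))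
    have h3 := h1.sub h2
    rw [hq_def]
    refine h3.congr_deriv ?_
    ring
  have hqconst : ∀ τ : ℝ, 0 ≤ τ → q τ = q 0 := by
    intro τ hτ
    refine constant_of_has_deriv_right_zero (f := q) (a := 0) (b := τ)
      (fun x hx => ((hdq x hx.1).mono Set.Icc_subset_Ici_self).continuousWithinAt)
      (fun x hx => (hdq x hx.1).mono (Set.Ici_subset_Ici.mpr hx.1)) τ ⟨hτ, le_refl τ⟩
  have hq0 : q 0 = ‖w0‖ - R φ := by
    simp [hq_def, ha_def, hv0]
  intro τ hτ
  have hq := hqconst τ hτ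
  rw [hq0] at hq
  rw [hq_def] at hq
  simp only at hq
  have hexp : Real.exp τ ≠ 0 := (Real.exp_pos τ).ne'
  have haτ : a τ = (‖w0‖ - R φ) * Real.exp (-τ) + R (τ + φ) := by
    rw [Real.exp_neg]
    field_simp
    linarith [hq]
  rw [hv τ hτ, haτ]

end Aux

/-- Explicit solution of `dw/dτ = f(w)`: with `φ = arg w₀`, `r = |w₀| − R(φ)`, the function
`w(τ) = [r e^{−τ} + R(τ+φ)] e^{i(τ+φ)}` is nonvanishing on `[0,∞)`, has `w(0) = w₀`,
solves the ODE on `[0,∞)`, and is the unique such solution. -/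
theorem explicit_multiplier_solution
    (R : ℝ → ℝ) (hper : Function.Periodic R (2 * π)) (hpos : ∀ θ : ℝ, 0 < R θ)
    (hC2 : ContDiff ℝ 2 R) (hRp : ∀ θ : ℝ, 0 < R θ + deriv R θ)
    (w0 : ℂ) (hw0 : w0 ≠ 0) :
    let φ : ℝ := w0.arg
    let r : ℝ := ‖w0‖ - R φ
    let w : ℝ → ℂ := fun τ =>
      ((r * Real.exp (-τ) + R (τ + φ) : ℝ) : ℂ) * Complex.exp (((τ + φ : ℝ) : ℂ) * Complex.I)
    (∀ τ : ℝ, 0 ≤ τ → w τ ≠ 0) ∧ w 0 = w0 ∧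
    (∀ τ : ℝ, 0 ≤ τ → HasDerivWithinAt w (fpol R (w τ)) (Set.Ici (0 : ℝ)) τ) ∧
    (∀ v : ℝ → ℂ, v 0 = w0 → (∀ τ : ℝ, 0 ≤ τ → v τ ≠ 0) →
      (∀ τ : ℝ, 0 ≤ τ → HasDerivWithinAt v (fpol R (v τ)) (Set.Ici (0 : ℝ)) τ) →
      ∀ τ : ℝ, 0 ≤ τ → v τ = w τ) := by
  intro φ r w
  have hφ : φ = w0.arg := rfl
  have hr : r = ‖w0‖ - R φ := rfl
  have hr0 : 0 < r + R φ := by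
    rw [hr]
    have := norm_pos_iff.mpr hw0
    linarith
  have hρpos := rho_pos hC2 hRp hr0
  have hper' := periodic_deriv' hper
  refine ⟨?_, ?_, ?_, ?_⟩
  · -- nonvanishing
    intro τ hτ
    have h := hρpos τ hτ
    exact mul_ne_zero (by exact_mod_cast h.ne') (Complex.exp_ne_zero _)
  · -- initial value
    show ((r * Real.exp (-0) + R (0 + φ) : ℝ) : ℂ) * Complex.exp (((0 + φ : ℝ) : ℂ) * Complex.I)
      = w0
    rw [neg_zero, Real.exp_zero, mul_one, zero_add, hr, hφ]
    have : ‖w0‖ - R w0.arg + R w0.arg = ‖w0‖ := by ring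
    rw [this]
    exact Complex.norm_mul_exp_arg_mul_I w0
  · -- the ODE
    intro τ hτ
    have hfe := fpol_eval hper hper' (hρpos τ hτ) (τ + φ)
    show HasDerivWithinAt w
      (fpol R (((r * Real.exp (-τ) + R (τ + φ) : ℝ) : ℂ)
        * Complex.exp (((τ + φ : ℝ) : ℂ) * Complex.I))) (Set.Ici (0 : ℝ)) τ
    rw [hfe]
    have hd := ((hasDerivAt_rho hC2 r φ τ).ofReal_comp).mul (hasDerivAt_cexp_aff φ τ)
    refine HasDerivAt.hasDerivWithinAt ?_
    refine hd.congr_deriv ?_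
    push_cast
    ring
  · -- uniqueness
    intro v hv0 hvne hdv τ hτ
    exact unique_sol hper hC2 hw0 hv0 hvne hdv τ hτ
end

section
/- Assume R(θ) + R'(θ) > 0 for all θ and let ε = min_{θ∈[0,2π]}(R(θ) + R'(θ)) > 0. For any r ∈ ℝ and φ ∈ ℝ, if ρ(τ) = r e^{−τ} + R(τ+φ) satisfies ρ(0) > 0, then ρ(τ) ≥ min(ρ(0), ε) > 0 for all τ ≥ 0. -/
open Complex Real

/-- Lower bound: if `ρ(τ) = r e^{−τ} + R(τ+φ)` has `ρ(0) > 0` and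
`ε = min_{θ∈[0,2π]}(R(θ) + R'(θ)) > 0`, then `ρ(τ) ≥ min(ρ(0), ε) > 0` for all `τ ≥ 0`. -/
theorem multiplier_lower_bound
    (R : ℝ → ℝ) (hper : Function.Periodic R (2 * π)) (hpos : ∀ θ : ℝ, 0 < R θ)
    (hC1 : ContDiff ℝ 1 R) (hRp : ∀ θ : ℝ, 0 < R θ + deriv R θ)
    (r φ : ℝ) :
    let ρ : ℝ → ℝ := fun τ => r * Real.exp (-τ) + R (τ + φ)
    let ε : ℝ := sInf ((fun θ => R θ + deriv R θ) '' Set.Icc 0 (2 * π))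
    0 < ρ 0 →
      0 < ε ∧ ∀ τ : ℝ, 0 ≤ τ → min (ρ 0) ε ≤ ρ τ ∧ 0 < min (ρ 0) ε := by
  intro ρ ε h0
  set F : ℝ → ℝ := fun θ => R θ + deriv R θ with hF
  have hRdiff : Differentiable ℝ R := hC1.differentiable one_ne_zero
  have hFcont : Continuous F := (hC1.continuous).add (hC1.continuous_deriv le_rfl)
  -- deriv R is periodic
  have hderper : Function.Periodic (deriv R) (2 * π) := by
    intro x
    have : (fun y => R (y + 2 * π)) = R := funext fun y => hper y
    rw [← deriv_comp_add_const R (2 * π) x, this]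
  have hFper : Function.Periodic F (2 * π) := fun x => by
    simp only [hF, hper x, hderper x]
  -- minimum attained
  have hne : (Set.Icc (0:ℝ) (2 * π)).Nonempty :=
    ⟨0, Set.mem_Icc.2 ⟨le_rfl, by positivity⟩⟩
  obtain ⟨x0, hx0, hmin⟩ := isCompact_Icc.exists_isMinOn hne (hFcont.continuousOn)
  have hbdd : BddBelow (F '' Set.Icc 0 (2 * π)) :=
    ⟨F x0, fun y ⟨z, hz, hzy⟩ => hzy ▸ hmin hz⟩
  have hεeq : ε = F x0 := by
    apply le_antisymm (csInf_le hbdd ⟨x0, hx0, rfl⟩)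
    exact le_csInf ⟨F x0, x0, hx0, rfl⟩ (fun y ⟨z, hz, hzy⟩ => hzy ▸ hmin hz)
  have hεpos : 0 < ε := hεeq ▸ hRp x0
  -- ε ≤ F θ for all θ
  have hεle : ∀ θ : ℝ, ε ≤ F θ := by
    intro θ
    obtain ⟨y, hy, hyθ⟩ := hFper.exists_mem_Ico₀ (by positivity) θ
    rw [hyθ]
    exact csInf_le hbdd ⟨y, ⟨hy.1, hy.2.le⟩, rfl⟩
  refine ⟨hεpos, fun τ hτ => ⟨?_, lt_min h0 hεpos⟩⟩
  -- monotone function h(t) = r + e^t R(t+φ) - ε e^t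
  set g : ℝ → ℝ := fun t => r + Real.exp t * R (t + φ) - ε * Real.exp t with hg
  have hgderiv : ∀ t, HasDerivAt g (Real.exp t * F (t + φ) - ε * Real.exp t) t := by
    intro t
    have h1 : HasDerivAt (fun s : ℝ => R (s + φ)) (deriv R (t + φ)) t := by
      have h := ((hRdiff (t + φ)).hasDerivAt.comp t
        ((hasDerivAt_id t).add_const φ)); rw [mul_one] at h; exact h
    have h2 : HasDerivAt (fun s => Real.exp s * R (s + φ))
        (Real.exp t * R (t + φ) + Real.exp t * deriv R (t + φ)) t :=
      (Real.hasDerivAt_exp t).mul h1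
    have h3 := ((h2.const_add r).sub ((Real.hasDerivAt_exp t).const_mul ε))
    have e : Real.exp t * F (t + φ) - ε * Real.exp t =
        Real.exp t * R (t + φ) + Real.exp t * deriv R (t + φ) - ε * Real.exp t := by
      simp only [hF]; ring
    rw [e]; exact h3
  have hgmono : Monotone g := by
    apply monotone_of_deriv_nonneg
    · exact fun t => (hgderiv t).differentiableAt
    · intro t
      rw [(hgderiv t).deriv]
      have := hεle (t + φ)
      nlinarith [Real.exp_pos t]
  have hkey : g 0 ≤ g τ := hgmono hτ
  have hg0 : g 0 = ρ 0 - ε := by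
    simp [hg, ρ, Real.exp_zero]
  have hgτ : g τ = Real.exp τ * (ρ τ - ε) := by
    have : Real.exp τ * (r * Real.exp (-τ)) = r := by
      rw [mul_comm r, ← mul_assoc, ← Real.exp_add]; simp
    simp only [hg, ρ]
    nlinarith [this]
  -- so ρ τ - ε ≥ e^{-τ} (ρ 0 - ε)
  have hexp1 : Real.exp (-τ) ≤ 1 := Real.exp_le_one_iff.2 (by linarith)
  have hexppos : 0 < Real.exp τ := Real.exp_pos τ
  have hmain : ρ 0 - ε ≤ Real.exp τ * (ρ τ - ε) := by
    rw [← hg0, ← hgτ]; exact hkey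
  rcases le_total (ρ 0) ε with hc | hc
  · rw [min_eq_left hc]
    -- ρ τ - ε ≥ (ρ 0 - ε)/e^τ ≥ (ρ 0 - ε) since ρ0 - ε ≤ 0, e^τ ≥ 1
    have h1 : 1 ≤ Real.exp τ := Real.one_le_exp hτ
    nlinarith
  · rw [min_eq_right hc]
    nlinarith
end

section
/- Set R_1(θ) = R(θ) − R_0, Q(θ) = ∫₀^θ R_1(θ')dθ', and for n ≥ 1 define h_n(θ_1,…,θ_{n−1}) = −Σ_{m=1}^{n−1} k_{n−m} R_0^{n−1−m} Q(θ_m), where k_n = 2^n. Suppose θ_1(t),…,θ_N(t) are differentiable real functions satisfying dθ_n/dt = k_n ∏_{m=1}^{n−1} R(θ_m(t)) for n = 1,…,N. Then for each n, the function α_n(t) = θ_n(t) + h_n(θ_1(t),…,θ_{n−1}(t)) satisfies dα_n/dt = k_n R_0^{n−1}. -/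
open Real

lemma telescope_aux (g : ℕ → ℝ) (R0 : ℝ) (k : ℕ) :
    ∑ m ∈ Finset.Icc 1 k, R0 ^ (k - m) * (g m - R0) * ∏ j ∈ Finset.Icc 1 (m - 1), g j
      = (∏ j ∈ Finset.Icc 1 k, g j) - R0 ^ k := by
  induction k with
  | zero => simp
  | succ k ih =>
    rw [Finset.sum_Icc_succ_top (Nat.le_add_left 1 k),
      Finset.prod_Icc_succ_top (Nat.le_add_left 1 k)]
    have h1 : ∀ m ∈ Finset.Icc 1 k,
        R0 ^ (k + 1 - m) * (g m - R0) * ∏ j ∈ Finset.Icc 1 (m - 1), g j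
          = R0 * (R0 ^ (k - m) * (g m - R0) * ∏ j ∈ Finset.Icc 1 (m - 1), g j) := by
      intro m hm
      simp only [Finset.mem_Icc] at hm
      rw [show k + 1 - m = (k - m) + 1 by omega]
      ring
    rw [Finset.sum_congr rfl h1, ← Finset.mul_sum, ih]
    simp only [Nat.add_sub_cancel, Nat.sub_self, pow_zero]
    ring

/-- Linearizing change of variables: with `R₁ = R − R₀`, `Q(θ) = ∫₀^θ R₁`,
`h_n(θ₁,…,θ_{n−1}) = −Σ_{m=1}^{n−1} 2^{n−m} R₀^{n−1−m} Q(θ_m)`, if the phases satisfy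
`dθ_n/dt = 2^n ∏_{m=1}^{n−1} R(θ_m)`, then `α_n = θ_n + h_n(θ₁,…,θ_{n−1})` satisfies
`dα_n/dt = 2^n R₀^{n−1}`. -/
theorem linearizing_change_of_variables
    (R : ℝ → ℝ) (hper : Function.Periodic R (2 * π)) (hcont : Continuous R)
    (R0 : ℝ) (hR0 : R0 = (2 * π)⁻¹ * ∫ x in (0:ℝ)..(2 * π), R x)
    (N : ℕ) (hN : 1 ≤ N) (θ : ℕ → ℝ → ℝ)
    (hθ : ∀ n, 1 ≤ n → n ≤ N → ∀ t : ℝ,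
      HasDerivAt (θ n) (((2:ℝ) ^ n) * ∏ m ∈ Finset.Icc 1 (n - 1), R (θ m t)) t)
    (n : ℕ) (hn1 : 1 ≤ n) (hnN : n ≤ N) (t : ℝ) :
    HasDerivAt
      (fun s : ℝ => θ n s +
        -(∑ m ∈ Finset.Icc 1 (n - 1), ((2:ℝ) ^ (n - m)) * R0 ^ (n - 1 - m) *
          ∫ x in (0:ℝ)..(θ m s), (R x - R0)))
      (((2:ℝ) ^ n) * R0 ^ (n - 1)) t := by
  have hcont' : Continuous (fun x => R x - R0) := hcont.sub continuous_const
  -- derivative of each summand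
  have hsum : HasDerivAt (fun s : ℝ => ∑ m ∈ Finset.Icc 1 (n - 1),
      ((2:ℝ) ^ (n - m)) * R0 ^ (n - 1 - m) * ∫ x in (0:ℝ)..(θ m s), (R x - R0))
      (∑ m ∈ Finset.Icc 1 (n - 1), ((2:ℝ) ^ (n - m)) * R0 ^ (n - 1 - m) *
        ((R (θ m t) - R0) * (((2:ℝ) ^ m) * ∏ j ∈ Finset.Icc 1 (m - 1), R (θ j t)))) t := by
    apply HasDerivAt.fun_sum
    intro m hm
    simp only [Finset.mem_Icc] at hm
    have hθm := hθ m hm.1 (le_trans (le_trans hm.2 (Nat.sub_le n 1)) hnN) t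
    have hF : HasDerivAt (fun u : ℝ => ∫ x in (0:ℝ)..u, (R x - R0))
        (R (θ m t) - R0) (θ m t) :=
      (hcont'.integral_hasStrictDerivAt 0 (θ m t)).hasDerivAt
    exact (hF.comp t hθm).const_mul _
  have hmain := ((hθ n hn1 hnN t).add hsum.neg)
  convert hmain using 1
  · rfl
  · rfl
  · rfl
  have hfold : ∀ m ∈ Finset.Icc 1 (n - 1),
      ((2:ℝ) ^ (n - m)) * R0 ^ (n - 1 - m) *
        ((R (θ m t) - R0) * (((2:ℝ) ^ m) * ∏ j ∈ Finset.Icc 1 (m - 1), R (θ j t)))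
      = (2:ℝ) ^ n * (R0 ^ (n - 1 - m) * (R (θ m t) - R0) *
          ∏ j ∈ Finset.Icc 1 (m - 1), R (θ j t)) := by
    intro m hm
    simp only [Finset.mem_Icc] at hm
    have h2 : (2:ℝ) ^ (n - m) * 2 ^ m = 2 ^ n := by
      rw [← pow_add]; congr 1; omega
    rw [← h2]; ring
  rw [Finset.sum_congr rfl hfold, ← Finset.mul_sum,
    telescope_aux (fun j => R (θ j t)) R0 (n - 1)]
  ring
end
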